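/- For every integer d ≥ 0, the formal power series identity Σ_{m≥0} (Σ_{k=0}^{d} C(d,k)·C(m+d−k, d)) t^m = (1+t)^d / (1−t)^{d+1} holds in ℚ[[t]]. -/

import Mathlib

/-!
Writing `(1 + t) ^ d / (1 - t) ^ (d + 1)` as the Cauchy product of `(1 + t) ^ d = ∑ C(d, k) t ^ k`
and `1 / (1 - t) ^ (d + 1) = ∑ C(d + j, d) t ^ j`, the coefficient of `t ^ m` is
`∑_{k + j = m} C(d, k) C(d + j, d)`. This is the given sum: the terms with `k > m` vanish on the
left (`m + d - k < d`), those with `k > d` on the right (`C(d, k) = 0`).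
-/

open PowerSeries Finset

theorem PowerSeries.coeff_one_add_X_pow {R : Type*} [CommSemiring R] (d n : ℕ) :
    coeff n ((1 + X : R⟦X⟧) ^ d) = d.choose n := by
  rw [← Polynomial.coe_X, ← Polynomial.coe_one, ← Polynomial.coe_add, ← Polynomial.coe_pow,
    Polynomial.coeff_coe, Polynomial.coeff_one_add_X_pow]

theorem Nat.sum_range_choose_mul_choose_eq_sum_antidiagonal (d m : ℕ) :
    ∑ k ∈ range (d + 1), d.choose k * (m + d - k).choose d =
      ∑ p ∈ antidiagonal m, d.choose p.1 * (d + p.2).choose d := by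
  set f : ℕ → ℕ := fun k => d.choose k * (m + d - k).choose d
  have extend_d : ∑ k ∈ range (d + 1), f k = ∑ k ∈ range (m + d + 1), f k :=
    sum_subset (range_subset_range.2 (by omega)) fun k hk hk' => by
      simp only [mem_range] at hk hk'
      simp only [f, Nat.choose_eq_zero_of_lt (show d < k by omega), zero_mul]
  have extend_m : ∑ k ∈ range (m + 1), f k = ∑ k ∈ range (m + d + 1), f k :=
    sum_subset (range_subset_range.2 (by omega)) fun k hk hk' => by
      simp only [mem_range] at hk hk'
      simp only [f, Nat.choose_eq_zero_of_lt (show m + d - k < d by omega), mul_zero]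
  rw [extend_d, ← extend_m, Nat.sum_antidiagonal_eq_sum_range_succ_mk]
  refine sum_congr rfl fun k hk => ?_
  rw [mem_range] at hk
  simp only [f, show m + d - k = d + (m - k) by omega]

theorem cross_polytope_ehrhart_series (d : ℕ) :
    (PowerSeries.mk fun m =>
        ((∑ k ∈ Finset.range (d + 1), d.choose k * (m + d - k).choose d : ℕ) : ℚ))
      * (1 - PowerSeries.X) ^ (d + 1) = (1 + PowerSeries.X) ^ d := by
  have cauchy_product : (PowerSeries.mk fun m =>
        ((∑ k ∈ Finset.range (d + 1), d.choose k * (m + d - k).choose d : ℕ) : ℚ)) =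
      (1 + X) ^ d * PowerSeries.mk fun m => ((d + m).choose d : ℚ) := by
    ext m
    simp only [coeff_mk, coeff_mul, coeff_one_add_X_pow, Nat.sum_range_choose_mul_choose_eq_sum_antidiagonal]
    push_cast
    rfl
  rw [cauchy_product, mul_assoc, mk_add_choose_mul_one_sub_pow_eq_one, mul_one]
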